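/- If P is a ring of subsets of a set X with P ⊆ P_seq, then the Q_P-topology on X/P is completely regular. -/

import Mathlib

open Set Topology

/-- The equivalence relation identifying points lying in exactly the same members of `P`. -/
def pSetoid {X : Type*} (P : Set (Set X)) : Setoid X where
  r x y := ∀ V ∈ P, x ∈ V ↔ y ∈ V
  iseqv := ⟨fun _ _ _ => Iff.rfl, fun h V hV => (h V hV).symm,
    fun h1 h2 V hV => (h1 V hV).trans (h2 V hV)⟩

/-- The quotient `X/P`. -/
def pQuot {X : Type*} (P : Set (Set X)) : Type _ := Quotient (pSetoid P)

/-- The `Q_P`-map `q : X → X/P`. -/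
def pMap {X : Type*} (P : Set (Set X)) : X → pQuot P := Quotient.mk (pSetoid P)

/-- The `Q_P`-topology on `X/P`, generated by the images `q[V]`, `V ∈ P`. -/
def pTop {X : Type*} (P : Set (Set X)) : TopologicalSpace (pQuot P) :=
  TopologicalSpace.generateFrom {S | ∃ V ∈ P, S = pMap P '' V}

/-- `R_seq`: sets `W` that are unions `⋃ₙ Uₙ` with `Uₖ ⊆ X \ Vₖ ⊆ Uₖ₊₁`, `Uₙ, Vₙ ∈ R`. -/
def seqFam {X : Type*} (R : Set (Set X)) : Set (Set X) :=
  {W | ∃ U V : ℕ → Set X, (∀ n, U n ∈ R) ∧ (∀ n, V n ∈ R) ∧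
    (∀ k, U k ⊆ (V k)ᶜ ∧ (V k)ᶜ ⊆ U (k + 1)) ∧ (⋃ n, U n) = W}

/-- The family of cozero sets of `X`. -/
def cozeroFam (X : Type*) [TopologicalSpace X] : Set (Set X) :=
  {W | ∃ f : X → ℝ, Continuous f ∧ (∀ x, f x ∈ Set.Icc (0 : ℝ) 1) ∧ W = f ⁻¹' Set.Ioc 0 1}

/-- A skeletal map: a continuous surjection such that the closure of the image of every
nonempty open set has nonempty interior. -/
def IsSkeletal {X Y : Type*} [TopologicalSpace X] [TopologicalSpace Y] (f : X → Y) : Prop :=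
  Continuous f ∧ Function.Surjective f ∧
    ∀ U : Set X, IsOpen U → U.Nonempty → (interior (closure (f '' U))).Nonempty

/-- A skeletal family of open subsets of `X`. -/
def SkeletalFamily {X : Type*} [TopologicalSpace X] (P : Set (Set X)) : Prop :=
  ∀ V : Set X, IsOpen V → V.Nonempty →
    ∃ W ∈ P, ∀ U ∈ P, U ⊆ W → U.Nonempty → (U ∩ V).Nonempty

/-- A π-base: a family of nonempty open sets such that every nonempty open set contains
a member of the family. -/
def IsPiBase {Y : Type*} [TopologicalSpace Y] (B : Set (Set Y)) : Prop :=
  (∀ b ∈ B, IsOpen b ∧ b.Nonempty) ∧ ∀ U : Set Y, IsOpen U → U.Nonempty → ∃ b ∈ B, b ⊆ U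

/-- A strategy for Player I in the open-open game produces nonempty open sets. -/
def ValidStrategy {X : Type*} [TopologicalSpace X] (σ : List (Set X) → Set X) : Prop :=
  ∀ l : List (Set X), IsOpen (σ l) ∧ (σ l).Nonempty

/-- `B` is a play of Player II against the strategy `σ` of Player I: each `B n` is a
nonempty open subset of the set produced by `σ` from the previous moves of Player II. -/
def IsPlayAgainst {X : Type*} [TopologicalSpace X] (σ : List (Set X) → Set X)
    (B : ℕ → Set X) : Prop :=
  ∀ n, IsOpen (B n) ∧ (B n).Nonempty ∧ B n ⊆ σ (List.ofFn (fun i : Fin n => B i))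

/-- A winning strategy for Player I in the open-open game: every play of Player II against
it has dense union. -/
def WinningStrategy {X : Type*} [TopologicalSpace X] (σ : List (Set X) → Set X) : Prop :=
  ValidStrategy σ ∧ ∀ B : ℕ → Set X, IsPlayAgainst σ B → Dense (⋃ n, B n)

/-- A space is I-favorable if Player I has a winning strategy in the open-open game. -/
def IFavorable (X : Type*) [TopologicalSpace X] : Prop :=
  ∃ σ : List (Set X) → Set X, WinningStrategy σ

/-- `P` is closed under the strategy `σ`. -/
def ClosedUnderStrategy {X : Type*} [TopologicalSpace X] (P : Set (Set X))
    (σ : List (Set X) → Set X) : Prop :=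
  σ [] ∈ P ∧ ∀ l : List (Set X), (∀ b ∈ l, b ∈ P) → σ l ∈ P

/-- The limit of an inverse system, as the subspace of threads in the product. -/
abbrev invLimit {ι : Type*} [Preorder ι] (Y : ι → Type*)
    (bond : ∀ i j : ι, i ≤ j → Y j → Y i) : Type _ :=
  {u : ∀ i, Y i // ∀ (i j : ι) (h : i ≤ j), bond i j h (u j) = u i}

/-- The topology of the inverse limit, with explicitly given topologies on factors. -/
def invLimitTop {ι : Type*} [Preorder ι] (Y : ι → Type*) (t : ∀ i, TopologicalSpace (Y i))
    (bond : ∀ i j : ι, i ≤ j → Y j → Y i) : TopologicalSpace (invLimit Y bond) :=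
  @instTopologicalSpaceSubtype _ _ (@Pi.topologicalSpace ι Y t)

/-- σ-completeness of an inverse system: each countable chain of indices has a least upper
bound `l`, and the canonical map from `Y l` to the limit of the countable subsystem is a
homeomorphism (an embedding whose range is the set of threads). -/
def SigmaComplete {ι : Type*} [Preorder ι] (Y : ι → Type*) (t : ∀ i, TopologicalSpace (Y i))
    (bond : ∀ i j : ι, i ≤ j → Y j → Y i) : Prop :=
  (∀ s : ℕ → ι, Monotone s → ∃ l, IsLUB (Set.range s) l) ∧
  ∀ (s : ℕ → ι) (hs : Monotone s) (l : ι) (hl : IsLUB (Set.range s) l),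
    @IsEmbedding (Y l) (∀ n, Y (s n)) (t l) (@Pi.topologicalSpace ℕ _ (fun n => t (s n)))
      (fun x n => bond (s n) l (hl.1 (Set.mem_range_self n)) x) ∧
    Set.range (fun (x : Y l) (n : ℕ) => bond (s n) l (hl.1 (Set.mem_range_self n)) x) =
      {u : ∀ n, Y (s n) | ∀ (n m : ℕ) (h : n ≤ m), bond (s n) (s m) (hs h) (u m) = u n}

/-- A σ-complete inverse system of topological spaces over a directed partial order,
with continuous surjective bonding maps. -/
structure TopInvSystem : Type 1 where
  ι : Type
  [ord : PartialOrder ι]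
  directed : IsDirected ι (· ≤ ·)
  Y : ι → Type
  [t : ∀ i, TopologicalSpace (Y i)]
  bond : ∀ i j : ι, i ≤ j → Y j → Y i
  bond_refl : ∀ i (x : Y i), bond i i le_rfl x = x
  bond_comp : ∀ (i j k : ι) (hij : i ≤ j) (hjk : j ≤ k) (x : Y k),
    bond i j hij (bond j k hjk x) = bond i k (hij.trans hjk) x
  bond_cont : ∀ (i j : ι) (h : i ≤ j), Continuous (bond i j h)
  bond_surj : ∀ (i j : ι) (h : i ≤ j), Function.Surjective (bond i j h)
  sigmaComplete : SigmaComplete Y t bond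

instance (S : TopInvSystem) : PartialOrder S.ι := S.ord
instance (S : TopInvSystem) (i : S.ι) : TopologicalSpace (S.Y i) := S.t i

/-- The limit of a `TopInvSystem`. -/
def TopInvSystem.Limit (S : TopInvSystem) : Type := invLimit S.Y S.bond

instance (S : TopInvSystem) : TopologicalSpace S.Limit :=
  inferInstanceAs (TopologicalSpace (invLimit S.Y S.bond))

/-- The bonding map `X/R → X/P` for `P ⊆ R`, sending `[x]_R` to `[x]_P`. -/
def pBond {X : Type*} (P R : Set (Set X)) (h : P ⊆ R) : pQuot R → pQuot P :=
  Quotient.lift (pMap P) (fun _ _ hab => Quotient.sound (fun V hV => hab V (h hV)))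

/-- A `T`-club on a space `X` (with `T` the cozero sets): a collection of countable
subfamilies of `T`, each closed under a fixed winning strategy for Player I, closed under
finite unions and intersections, contained in its `seq`-family, which is cofinal among
countable subfamilies of `T` and closed under countable chains. -/
def TClub {X : Type*} [TopologicalSpace X] (C : Set (Set (Set X))) : Prop :=
  ∃ σ : List (Set X) → Set X, WinningStrategy σ ∧
    (∀ P ∈ C, P.Countable ∧ P ⊆ cozeroFam X ∧ ClosedUnderStrategy P σ ∧
      (∀ A ∈ P, ∀ B ∈ P, A ∪ B ∈ P ∧ A ∩ B ∈ P) ∧ P ⊆ seqFam P) ∧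
    (∀ Q : Set (Set X), Q.Countable → Q ⊆ cozeroFam X → ∃ P ∈ C, Q ⊆ P) ∧
    (∀ f : ℕ → Set (Set X), (∀ n, f n ∈ C) → Monotone f → (⋃ n, f n) ∈ C)

/-!
If `x ∈ q[W]` and `W = ⋃ Uₙ` witnesses `W ∈ P_seq`, then `x ∈ q[Uₙ] ⊆ (q[Vₙ])ᶜ ⊆ q[Uₙ₊₁] ⊆ q[W]`
for some `n`, with `(q[Vₙ])ᶜ` closed, so `X/P` is regular. For a countable `R ⊆ P` closed under
`∩` and containing the witnesses `Uₙ, Vₙ` of its members, `X/R` is moreover second countable,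
hence normal and completely regular. Every `W ∈ P` lies in such an `R`, so the `Q_P`-topology is
the supremum of the topologies pulled back along the maps `X/P → X/R`, and complete regularity
passes to induced topologies and to suprema.
-/

open TopologicalSpace

theorem exists_countable_superset_closed {α : Type*} {P Q : Set α} (N : α → α → Set α)
    (hN : ∀ a b, (N a b).Countable) (hNP : ∀ a ∈ P, ∀ b ∈ P, N a b ⊆ P)
    (hQ : Q.Countable) (hQP : Q ⊆ P) :
    ∃ R, R.Countable ∧ Q ⊆ R ∧ R ⊆ P ∧ ∀ a ∈ R, ∀ b ∈ R, N a b ⊆ R := by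
  let step : Set α → Set α := fun s => s ∪ ⋃ a ∈ s, ⋃ b ∈ s, N a b
  let S : ℕ → Set α := fun n => step^[n] Q
  have hS_succ (n : ℕ) : S (n + 1) = step (S n) := Function.iterate_succ_apply' step n Q
  have hS_mono : Monotone S :=
    monotone_nat_of_le_succ fun n => (hS_succ n).symm ▸ subset_union_left
  have hS_countable (n : ℕ) : (S n).Countable := by
    induction n with
    | zero => exact hQ
    | succ n ih =>
      rw [hS_succ]
      exact ih.union (ih.biUnion fun a _ => ih.biUnion fun b _ => hN a b)
  have hS_subset (n : ℕ) : S n ⊆ P := by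
    induction n with
    | zero => exact hQP
    | succ n ih =>
      rw [hS_succ]
      exact union_subset ih (iUnion₂_subset fun a ha => iUnion₂_subset fun b hb =>
        hNP a (ih ha) b (ih hb))
  refine ⟨⋃ n, S n, countable_iUnion hS_countable, subset_iUnion S 0, iUnion_subset hS_subset,
    fun a ha b hb => ?_⟩
  obtain ⟨i, hai⟩ := mem_iUnion.mp ha
  obtain ⟨j, hbj⟩ := mem_iUnion.mp hb
  have hN_subset : N a b ⊆ S (max i j + 1) := by
    rw [hS_succ]
    refine subset_union_of_subset_right ?_ _
    exact subset_iUnion₂_of_subset a (hS_mono (le_max_left i j) hai)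
      (subset_iUnion₂_of_subset b (hS_mono (le_max_right i j) hbj) subset_rfl)
  exact hN_subset.trans (subset_iUnion S _)

section pQuot

variable {X : Type*} {P R : Set (Set X)}

theorem pMap_mem_image_iff {V : Set X} (hV : V ∈ P) {a : X} :
    pMap P a ∈ pMap P '' V ↔ a ∈ V :=
  ⟨fun ⟨_, hb, hba⟩ => (Quotient.exact hba V hV).mp hb, mem_image_of_mem _⟩

theorem pMap_image_inter {V W : Set X} (hW : W ∈ P) :
    pMap P '' (V ∩ W) = pMap P '' V ∩ pMap P '' W :=
  (image_inter_subset _ _ _).antisymm fun _ ⟨⟨a, ha, hay⟩, ⟨_, hb, hby⟩⟩ =>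
    ⟨a, ⟨ha, (pMap_mem_image_iff hW).mp (hay ▸ hby ▸ mem_image_of_mem _ hb)⟩, hay⟩

theorem isOpen_pMap_image {V : Set X} (hV : V ∈ P) : IsOpen[pTop P] (pMap P '' V) :=
  isOpen_generateFrom_of_mem ⟨V, hV, rfl⟩

theorem pTop_isTopologicalBasis (hinter : ∀ A ∈ P, ∀ B ∈ P, A ∩ B ∈ P) :
    @IsTopologicalBasis _ (pTop P) (insert univ {S | ∃ V ∈ P, S = pMap P '' V}) := by
  refine @isTopologicalBasis_of_subbasis_of_inter _ (pTop P) _ rfl ?_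
  rintro _ ⟨V, hV, rfl⟩ _ ⟨W, hW, rfl⟩
  exact ⟨V ∩ W, hinter V hV W hW, (pMap_image_inter hW).symm⟩

theorem pTop_regularSpace (hinter : ∀ A ∈ P, ∀ B ∈ P, A ∩ B ∈ P) (hseq : P ⊆ seqFam P) :
    @RegularSpace (pQuot P) (pTop P) := by
  let := pTop P
  refine .of_exists_mem_nhds_isClosed_subset fun x s hs => ?_
  obtain ⟨b, hb, hxb, hbs⟩ := (pTop_isTopologicalBasis hinter).mem_nhds_iff.mp hs
  rcases hb with rfl | ⟨W, hW, rfl⟩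
  · exact ⟨univ, Filter.univ_mem, isClosed_univ, hbs⟩
  obtain ⟨U, V, hU, hV, hUV, rfl⟩ := hseq hW
  obtain ⟨a, haW, rfl⟩ := hxb
  obtain ⟨n, han⟩ := mem_iUnion.mp haW
  refine ⟨(pMap P '' V n)ᶜ, Filter.mem_of_superset ((isOpen_pMap_image (hU n)).mem_nhds
    ⟨a, han, rfl⟩) ?_, (isOpen_pMap_image (hV n)).isClosed_compl, ?_⟩
  · rintro _ ⟨b, hb, rfl⟩
    exact mt (pMap_mem_image_iff (hV n)).mp ((hUV n).1 hb)
  · refine Quotient.ind fun b hb => hbs ⟨b, mem_iUnion_of_mem (n + 1) ?_, rfl⟩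
    exact (hUV n).2 (mt (pMap_mem_image_iff (hV n)).mpr hb)

theorem pTop_completelyRegularSpace_of_countable (hc : P.Countable)
    (hinter : ∀ A ∈ P, ∀ B ∈ P, A ∩ B ∈ P) (hseq : P ⊆ seqFam P) :
    @CompletelyRegularSpace (pQuot P) (pTop P) := by
  let := pTop P
  have := pTop_regularSpace hinter hseq
  have : SecondCountableTopology (pQuot P) := SecondCountableTopology.mk' <|
    (hc.image (pMap P '' ·)).mono (by rintro _ ⟨V, hV, rfl⟩; exact mem_image_of_mem _ hV)
  infer_instance

theorem pBond_preimage_pMap_image (h : R ⊆ P) {V : Set X} (hV : V ∈ R) :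
    pBond R P h ⁻¹' (pMap R '' V) = pMap P '' V := by
  ext y
  induction y using Quotient.ind with
  | _ a => exact (pMap_mem_image_iff hV).trans (pMap_mem_image_iff (h hV)).symm

theorem continuous_pBond (h : R ⊆ P) : Continuous[pTop P, pTop R] (pBond R P h) := by
  refine continuous_generateFrom_iff.mpr ?_
  rintro _ ⟨V, hV, rfl⟩
  rw [pBond_preimage_pMap_image h hV]
  exact isOpen_pMap_image (h hV)

theorem pTop_eq_iInf_induced {ι : Type*} (R : ι → Set (Set X)) (hRP : ∀ i, R i ⊆ P)
    (hcover : ∀ V ∈ P, ∃ i, V ∈ R i) :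
    pTop P = ⨅ i, (pTop (R i)).induced (pBond (R i) P (hRP i)) := by
  refine le_antisymm (le_iInf fun i => (continuous_pBond (hRP i)).le_induced) ?_
  refine le_generateFrom ?_
  rintro _ ⟨V, hV, rfl⟩
  obtain ⟨i, hVi⟩ := hcover V hV
  refine iInf_le (fun i => (pTop (R i)).induced (pBond (R i) P (hRP i))) i _ ?_
  exact ⟨_, isOpen_pMap_image hVi, pBond_preimage_pMap_image (hRP i) hVi⟩

end pQuot

theorem exists_countable_subfamily_inter_seq {X : Type*} {P : Set (Set X)}
    (hinter : ∀ A ∈ P, ∀ B ∈ P, A ∩ B ∈ P) (hseq : P ⊆ seqFam P) {W : Set X} (hW : W ∈ P) :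
    ∃ R ⊆ P, R.Countable ∧ W ∈ R ∧ (∀ A ∈ R, ∀ B ∈ R, A ∩ B ∈ R) ∧ R ⊆ seqFam R := by
  have hseq' : ∀ A ∈ P, ∃ U V : ℕ → Set X, (∀ n, U n ∈ P) ∧ (∀ n, V n ∈ P) ∧
      (∀ k, U k ⊆ (V k)ᶜ ∧ (V k)ᶜ ⊆ U (k + 1)) ∧ (⋃ n, U n) = A := fun A hA => hseq hA
  choose! U V hU hV hUV hUnion using hseq'
  obtain ⟨R, hRc, hWR, hRP, hR⟩ := exists_countable_superset_closed
    (fun A B => insert (A ∩ B) (range (U A) ∪ range (V A)))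
    (fun A B => ((countable_range _).union (countable_range _)).insert _)
    (fun A hA B hB => insert_subset (hinter A hA B hB)
      (union_subset (range_subset_iff.mpr (hU A hA)) (range_subset_iff.mpr (hV A hA))))
    (countable_singleton W) (singleton_subset_iff.mpr hW)
  refine ⟨R, hRP, hRc, hWR rfl, fun A hA B hB => hR A hA B hB (mem_insert _ _),
    fun A hA => ⟨U A, V A, fun n => ?_, fun n => ?_, hUV A (hRP hA), hUnion A (hRP hA)⟩⟩
  · exact hR A hA A hA (mem_insert_of_mem _ (Or.inl (mem_range_self n)))
  · exact hR A hA A hA (mem_insert_of_mem _ (Or.inr (mem_range_self n)))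

theorem stmt8 {X : Type*} (P : Set (Set X))
    (hring : ∀ A ∈ P, ∀ B ∈ P, A ∪ B ∈ P ∧ A ∩ B ∈ P)
    (hseq : P ⊆ seqFam P) :
    @CompletelyRegularSpace (pQuot P) (pTop P) := by
  have hinter : ∀ A ∈ P, ∀ B ∈ P, A ∩ B ∈ P := fun A hA B hB => (hring A hA B hB).2
  let ι := {R : Set (Set X) // R ⊆ P ∧ R.Countable ∧ (∀ A ∈ R, ∀ B ∈ R, A ∩ B ∈ R) ∧
    R ⊆ seqFam R}
  have hcover (W : Set X) (hW : W ∈ P) : ∃ R : ι, W ∈ R.1 :=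
    let ⟨R, hRP, hRc, hWR, hRinter, hRseq⟩ := exists_countable_subfamily_inter_seq hinter hseq hW
    ⟨⟨R, hRP, hRc, hRinter, hRseq⟩, hWR⟩
  rw [pTop_eq_iInf_induced (fun R : ι => R.1) (fun R => R.2.1) hcover]
  exact completelyRegularSpace_iInf fun R => completelyRegularSpace_induced
    (pTop_completelyRegularSpace_of_countable R.2.2.1 R.2.2.2.1 R.2.2.2.2) _
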